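/- Let σ ∈ (1,2), c > 0, and let Φ_c be the complex endpoint soliton of gDNLS. The linearized operator satisfies S''_c(Φ_c)(i∂ₓΦ_c) = -(c²/2)σ|Φ_c|^{2σ}Φ_c, and consequently ⟨S''_c(Φ_c)i∂ₓΦ_c, i∂ₓΦ_c⟩ = -(c⁴/2)(2-σ)σ M(Φ_c) < 0. -/

import Mathlib

open MeasureTheory Complex

noncomputable def phi (σ c x : ℝ) : ℝ :=
  (2*c*(σ+1) / (σ^2 * (c*x)^2 + 1)) ^ (1/(2*σ))

noncomputable def Phi (σ c : ℝ) (x : ℝ) : ℂ :=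
  (phi σ c x : ℂ) *
    Complex.exp (Complex.I * ((c/2) * x : ℝ)
      - (Complex.I / (2*σ + 2)) * ((∫ y in Set.Iio x, (phi σ c y) ^ (2*σ) : ℝ) : ℂ))

/-- Second variation $S''_c(\Phi)$ applied to $f$. -/
noncomputable def Spp (σ c : ℝ) (Φ f : ℝ → ℂ) (x : ℝ) : ℂ :=
  -(deriv (deriv f) x) + Complex.I * (c : ℂ) * deriv f x + ((c^2/4 : ℝ) : ℂ) * f x
    - Complex.I * (σ : ℂ) * ((‖Φ x‖ ^ (2*σ - 2) : ℝ) : ℂ) *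
        (starRingEnd ℂ) (Φ x) * deriv Φ x * f x
    - Complex.I * (σ : ℂ) * ((‖Φ x‖ ^ (2*σ - 2) : ℝ) : ℂ) *
        Φ x * deriv Φ x * (starRingEnd ℂ) (f x)
    - Complex.I * ((‖Φ x‖ ^ (2*σ) : ℝ) : ℂ) * deriv f x

noncomputable def Mass (σ c : ℝ) : ℝ := (1/2) * ∫ x : ℝ, ‖Phi σ c x‖^2

/-!
Write `Φ = φ e^{iθ}` and `Q = Φ'/Φ`; for the endpoint soliton the phase is explicit and
`Q = ic/2 - c/(σcx - i)`. On `f = iΦ' = iΦQ` the operator `S''_c(Φ)` acts as multiplication of `Φ`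
by a polynomial in `Q, Q', Q'', conj Q` and `|Φ|^{2σ}`, and this polynomial collapses to
`-(c²/2)σ|Φ|^{2σ}` by a rational identity in `σcx`. Pairing with `iΦ'` then leaves
`(c²/2)σ|Φ|^{2σ+2} Im Q` with `Im Q = c/2 - |Φ|^{2σ}/(2σ+2)`. Since `|Φ|^{2σ}` is a multiple of
`(σ²c²x²+1)⁻¹`, everything reduces to `J(q) = ∫ (Bx²+1)^(-q)`, finite for `q > 1/2` (for the
mass `q = 1/σ`, whence `σ < 2`); integrating `(x (Bx²+1)^(-q))'` gives
`J(q+1) = (2q-1)/(2q) J(q)`, and at `q = 1/σ` this factor is `(2 - σ)/2`.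
-/

open MeasureTheory Set Filter Topology Complex ComplexConjugate

section PowerIntegrals

variable {B q : ℝ}

lemma integrable_rpow_neg_mul_sq_add_one (hB : 0 < B) (hq : 1/2 < q) :
    Integrable (fun x : ℝ => (B*x^2+1)^(-q)) := by
  have h : Integrable (fun x : ℝ => ((1:ℝ)+‖x‖^2)^(-(2*q)/2)) :=
    integrable_rpow_neg_one_add_norm_sq (by simp; linarith)
  refine (h.comp_mul_left' (R := √B) (by positivity)).congr (ae_of_all _ fun x => ?_)
  simp only [Real.norm_eq_abs, sq_abs, mul_pow, Real.sq_sqrt hB.le]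
  ring_nf

lemma integral_rpow_neg_mul_sq_add_one_pos (hB : 0 < B) (hq : 1/2 < q) :
    0 < ∫ x : ℝ, (B*x^2+1)^(-q) :=
  integral_pos_of_integrable_nonneg_nonzero (x := 0)
    ((by fun_prop : Continuous fun x : ℝ => B*x^2+1).rpow_const
      fun x => Or.inl (by positivity : (0:ℝ) < B*x^2+1).ne')
    (integrable_rpow_neg_mul_sq_add_one hB hq) (fun x => by positivity) (by simp)

lemma tendsto_mul_rpow_neg_mul_sq_add_one {l : Filter ℝ} (hl : Tendsto (|·|) l atTop)
    (hB : 0 < B) (hq : 1/2 < q) :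
    Tendsto (fun x : ℝ => x * (B*x^2+1)^(-q)) l (𝓝 0) := by
  have hbound : ∀ᶠ x in l, ‖x * (B*x^2+1)^(-q)‖ ≤ B^(-q) * |x|^(-(2*q-1)) := by
    filter_upwards [hl.eventually_gt_atTop 0] with x hx
    have hBx : 0 < B * |x|^2 := by positivity
    calc ‖x * (B*x^2+1)^(-q)‖ = |x| * (B*|x|^2+1)^(-q) := by
          rw [norm_mul, Real.norm_eq_abs, sq_abs, Real.norm_of_nonneg (by positivity)]
      _ ≤ |x| * (B*|x|^2)^(-q) := by
          exact mul_le_mul_of_nonneg_left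
            (Real.rpow_le_rpow_of_nonpos hBx (by linarith) (by linarith)) (abs_nonneg x)
      _ = B^(-q) * |x|^(-(2*q-1)) := by
          have hx2 : (|x|^2)^(-q) = |x|^(-(2*q)) := by
            rw [← Real.rpow_natCast, ← Real.rpow_mul hx.le]; push_cast; ring_nf
          rw [Real.mul_rpow hB.le (by positivity), hx2, show -(2*q-1) = 1 + -(2*q) by ring,
            Real.rpow_add hx, Real.rpow_one]
          ring
  refine squeeze_zero_norm' hbound ?_
  have hdecay := ((tendsto_rpow_neg_atTop (y := 2*q-1) (by linarith)).comp hl).const_mul (B^(-q))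
  rw [mul_zero] at hdecay
  exact hdecay

lemma hasDerivAt_mul_rpow_neg_mul_sq_add_one (hB : 0 ≤ B) (x : ℝ) :
    HasDerivAt (fun x : ℝ => x * (B*x^2+1)^(-q))
      ((1-2*q) * (B*x^2+1)^(-q) + 2*q * (B*x^2+1)^(-(q+1))) x := by
  have hw : 0 < B*x^2+1 := by positivity
  refine ((hasDerivAt_id' x).mul ((((hasDerivAt_pow 2 x).const_mul B).add_const 1).rpow_const
    (p := -q) (Or.inl hw.ne'))).congr_deriv ?_
  rw [show -q - 1 = -(q+1) by ring, show (B*x^2+1)^(-q) = (B*x^2+1) * (B*x^2+1)^(-(q+1)) by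
    conv_lhs => rw [show -q = 1 + -(q+1) by ring, Real.rpow_add hw, Real.rpow_one]]
  push_cast
  ring

lemma integral_rpow_neg_mul_sq_add_one_add_one (hB : 0 < B) (hq : 1/2 < q) :
    ∫ x : ℝ, (B*x^2+1)^(-(q+1)) = (2*q-1)/(2*q) * ∫ x : ℝ, (B*x^2+1)^(-q) := by
  have hJ := integrable_rpow_neg_mul_sq_add_one hB hq
  have hJ₁ := integrable_rpow_neg_mul_sq_add_one hB (q := q+1) (by linarith)
  have hparts := integral_of_hasDerivAt_of_tendsto (hasDerivAt_mul_rpow_neg_mul_sq_add_one hB.le)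
    ((hJ.const_mul _).add (hJ₁.const_mul _))
    (tendsto_mul_rpow_neg_mul_sq_add_one tendsto_abs_atBot_atTop hB hq)
    (tendsto_mul_rpow_neg_mul_sq_add_one tendsto_abs_atTop_atTop hB hq)
  rw [integral_add (hJ.const_mul _) (hJ₁.const_mul _), integral_const_mul, integral_const_mul]
    at hparts
  field_simp
  linarith

end PowerIntegrals

lemma hasDerivAt_integral_Iio {E : Type*} [NormedAddCommGroup E] [NormedSpace ℝ E]
    [CompleteSpace E] {f : ℝ → E} {x : ℝ} (hf : Integrable f) (hx : ContinuousAt f x) :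
    HasDerivAt (fun b => ∫ y in Iio b, f y) (f x) x := by
  have hsplit : ∀ b, ∫ y in Iio b, f y = (∫ y in Iic 0, f y) + ∫ y in (0:ℝ)..b, f y := fun b => by
    rw [setIntegral_congr_set Iio_ae_eq_Iic,
      ← intervalIntegral.integral_Iic_sub_Iic hf.integrableOn hf.integrableOn]
    abel
  simp only [hsplit]
  exact (intervalIntegral.integral_hasDerivAt_right hf.intervalIntegrable
    hf.aestronglyMeasurable.stronglyMeasurableAtFilter hx).const_add _

lemma Spp_I_deriv_of_hasDerivAt {Φ Q Q' Q'' : ℝ → ℂ} (σ c : ℝ)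
    (hΦ : ∀ x, HasDerivAt Φ (Φ x * Q x) x) (hQ : ∀ x, HasDerivAt Q (Q' x) x)
    (hQ' : ∀ x, HasDerivAt Q' (Q'' x) x) {x : ℝ} (hx : Φ x ≠ 0) :
    Spp σ c Φ (fun y => I * deriv Φ y) x = Φ x * (-I * (Q x^3 + 3*Q x*Q' x + Q'' x)
      + (((‖Φ x‖^(2*σ) : ℝ) : ℂ) - c) * (Q x^2 + Q' x) + I * ((c^2/4 : ℝ) : ℂ) * Q x
      + σ * ((‖Φ x‖^(2*σ) : ℝ) : ℂ) * Q x * (Q x - conj (Q x))) := by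
  have hD : deriv Φ = fun y => Φ y * Q y := funext fun y => (hΦ y).deriv
  have hD₁ : ∀ y, HasDerivAt (fun y => I * (Φ y * Q y)) (I * (Φ y * (Q y^2 + Q' y))) y :=
    fun y => (((hΦ y).mul (hQ y)).const_mul I).congr_deriv (by ring)
  have hD₂ : HasDerivAt (fun y => I * (Φ y * (Q y^2 + Q' y)))
      (I * (Φ x * (Q x^3 + 3*Q x*Q' x + Q'' x))) x :=
    (((hΦ x).mul (((hQ x).pow 2).add (hQ' x))).const_mul I).congr_deriv
      (by simp only [Pi.add_apply, Pi.pow_apply]; push_cast; ring)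
  have hmod : ((‖Φ x‖^(2*σ-2) : ℝ) : ℂ) * (conj (Φ x) * Φ x) = ((‖Φ x‖^(2*σ) : ℝ) : ℂ) := by
    rw [conj_mul', ← ofReal_pow, ← ofReal_mul, ← Real.rpow_natCast,
      ← Real.rpow_add (norm_pos_iff.2 hx)]
    norm_num
  simp only [Spp, hD, funext fun y => (hD₁ y).deriv, hD₂.deriv, map_mul, conj_I]
  linear_combination σ * Φ x * Q x * (Q x - conj (Q x)) * hmod
    + (Φ x * (Q x^2 + Q' x) * (c - ((‖Φ x‖^(2*σ) : ℝ) : ℂ))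
      + σ * ((‖Φ x‖^(2*σ-2) : ℝ) : ℂ) * Φ x^2 * conj (Φ x) * Q x * (conj (Q x) - Q x)) * I_sq

-- `‖Phi σ c x‖ ^ (2σ)`; `phi` is its `1/(2σ)`-th power.
noncomputable def solitonDensity (σ c x : ℝ) : ℝ := 2*c*(σ+1) / (σ^2 * (c*x)^2 + 1)

-- `Φ'/Φ`: real part `φ'/φ = -σc²x/(σ²c²x²+1)`, imaginary part the phase derivative
-- `c/2 - ‖Φ‖^(2σ)/(2σ+2)`.
noncomputable def solitonLogDeriv (σ c x : ℝ) : ℂ := I * c / 2 - c / ((σ*c*x : ℝ) - I)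

lemma ofReal_sub_I_ne_zero (t : ℝ) : (t : ℂ) - I ≠ 0 := fun h => by
  simpa using congrArg im h

lemma ofReal_add_I_ne_zero (t : ℝ) : (t : ℂ) + I ≠ 0 := fun h => by
  simpa using congrArg im h

lemma hasDerivAt_ofReal_mul_sub_I (a x : ℝ) :
    HasDerivAt (fun y : ℝ => ((a*y : ℝ) : ℂ) - I) a x :=
  (((hasDerivAt_id x).const_mul a).ofReal_comp.sub_const I).congr_deriv (by simp)

section Soliton

variable {σ c : ℝ}

lemma solitonDensity_pos (hσ : 0 < σ) (hc : 0 < c) (x : ℝ) : 0 < solitonDensity σ c x := by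
  unfold solitonDensity; positivity

lemma solitonDensity_rpow (hσ : 0 < σ) (hc : 0 < c) (p x : ℝ) :
    solitonDensity σ c x ^ p = (2*c*(σ+1))^p * ((σ^2*c^2)*x^2+1)^(-p) := by
  rw [solitonDensity, Real.div_rpow (by positivity) (by positivity), Real.rpow_neg (by positivity),
    div_eq_mul_inv]
  ring_nf

lemma integrable_solitonDensity_rpow (hσ : 0 < σ) (hc : 0 < c) {p : ℝ} (hp : 1/2 < p) :
    Integrable (fun x => solitonDensity σ c x ^ p) := by
  simp only [solitonDensity_rpow hσ hc]
  exact (integrable_rpow_neg_mul_sq_add_one (by positivity) hp).const_mul _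

lemma integral_solitonDensity_rpow_pos (hσ : 0 < σ) (hc : 0 < c) {p : ℝ} (hp : 1/2 < p) :
    0 < ∫ x, solitonDensity σ c x ^ p := by
  simp only [solitonDensity_rpow hσ hc, integral_const_mul]
  exact mul_pos (by positivity) (integral_rpow_neg_mul_sq_add_one_pos (by positivity) hp)

lemma integral_solitonDensity_rpow_add_one (hσ : 0 < σ) (hc : 0 < c) {p : ℝ} (hp : 1/2 < p) :
    ∫ x, solitonDensity σ c x ^ (p+1)
      = 2*c*(σ+1) * ((2*p-1)/(2*p)) * ∫ x, solitonDensity σ c x ^ p := by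
  simp only [solitonDensity_rpow hσ hc, integral_const_mul,
    integral_rpow_neg_mul_sq_add_one_add_one (by positivity : 0 < σ^2*c^2) hp,
    Real.rpow_add_one (by positivity : 2*c*(σ+1) ≠ 0)]
  ring

lemma hasDerivAt_solitonDensity (x : ℝ) :
    HasDerivAt (solitonDensity σ c)
      (solitonDensity σ c x * (-(2*σ^2*c^2*x) / (σ^2*(c*x)^2+1))) x := by
  have hw : σ^2*(c*x)^2+1 ≠ 0 := by positivity
  have hden : HasDerivAt (fun y => σ^2*(c*y)^2+1) (2*σ^2*c^2*x) x :=
    ((((hasDerivAt_pow 2 x).const_mul (σ^2*c^2)).add_const 1).congr_deriv (by ring))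
      |>.congr_of_eventuallyEq (.of_forall fun y => by ring)
  refine ((hasDerivAt_const x (2*c*(σ+1))).div hden hw).congr_deriv ?_
  unfold solitonDensity
  field_simp
  ring

lemma phi_eq_solitonDensity_rpow (x : ℝ) : phi σ c x = solitonDensity σ c x ^ (1/(2*σ)) := rfl

lemma phi_pos (hσ : 0 < σ) (hc : 0 < c) (x : ℝ) : 0 < phi σ c x :=
  Real.rpow_pos_of_pos (solitonDensity_pos hσ hc x) _

lemma phi_rpow_two_mul (hσ : 0 < σ) (hc : 0 < c) (x : ℝ) :
    phi σ c x ^ (2*σ) = solitonDensity σ c x := by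
  rw [phi_eq_solitonDensity_rpow, ← Real.rpow_mul (solitonDensity_pos hσ hc x).le,
    one_div_mul_cancel (by positivity), Real.rpow_one]

lemma phi_sq (hσ : 0 < σ) (hc : 0 < c) (x : ℝ) : phi σ c x ^ 2 = solitonDensity σ c x ^ (1/σ) := by
  rw [phi_eq_solitonDensity_rpow, ← Real.rpow_natCast,
    ← Real.rpow_mul (solitonDensity_pos hσ hc x).le]
  congr 1
  field_simp
  norm_num

lemma hasDerivAt_phi (hσ : 0 < σ) (hc : 0 < c) (x : ℝ) :
    HasDerivAt (phi σ c) (phi σ c x * (-(σ*c^2*x) / (σ^2*(c*x)^2+1))) x := by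
  have hρ := (solitonDensity_pos hσ hc x).ne'
  refine ((hasDerivAt_solitonDensity x).rpow_const (p := 1/(2*σ)) (Or.inl hρ)).congr_deriv ?_
  rw [Real.rpow_sub_one hρ, ← phi_eq_solitonDensity_rpow]
  field_simp

lemma re_solitonLogDeriv (x : ℝ) :
    (solitonLogDeriv σ c x).re = -(σ*c^2*x) / (σ^2*(c*x)^2+1) := by
  simp [solitonLogDeriv, Complex.div_re, Complex.normSq_apply]
  field_simp

lemma im_solitonLogDeriv (hσ : 0 < σ) (x : ℝ) :
    (solitonLogDeriv σ c x).im = c/2 - solitonDensity σ c x / (2*σ+2) := by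
  simp [solitonLogDeriv, solitonDensity, Complex.div_im, Complex.normSq_apply]
  field_simp
  ring

lemma hasDerivAt_integral_Iio_phi_rpow (hσ : 0 < σ) (hc : 0 < c) (x : ℝ) :
    HasDerivAt (fun b => ∫ y in Iio b, phi σ c y ^ (2*σ)) (solitonDensity σ c x) x := by
  simp only [phi_rpow_two_mul hσ hc]
  have hcont : Continuous (solitonDensity σ c) :=
    continuous_const.div (by fun_prop) fun y => by positivity
  simpa using hasDerivAt_integral_Iio
    (by simpa using integrable_solitonDensity_rpow hσ hc (p := 1) (by norm_num)) hcont.continuousAt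

lemma hasDerivAt_Phi (hσ : 0 < σ) (hc : 0 < c) (x : ℝ) :
    HasDerivAt (Phi σ c) (Phi σ c x * solitonLogDeriv σ c x) x := by
  have hphase : HasDerivAt
      (fun y => I * (((c/2) * y : ℝ) : ℂ)
        - (I / (2*σ + 2)) * ((∫ y in Iio y, phi σ c y ^ (2*σ) : ℝ) : ℂ))
      (I * (c/2 : ℝ) - (I / (2*σ + 2)) * (solitonDensity σ c x : ℂ)) x :=
    ((((hasDerivAt_id x).const_mul (c/2)).ofReal_comp.const_mul I).congr_deriv (by simp)).sub
      ((hasDerivAt_integral_Iio_phi_rpow hσ hc x).ofReal_comp.const_mul _)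
  have hQ : solitonLogDeriv σ c x = ((-(σ*c^2*x) / (σ^2*(c*x)^2+1) : ℝ) : ℂ)
      + I * ((c/2 - solitonDensity σ c x / (2*σ+2) : ℝ) : ℂ) :=
    Complex.ext
      (by simp only [add_re, ofReal_re, I_mul_re, ofReal_im, neg_zero, add_zero,
        re_solitonLogDeriv])
      (by simp only [add_im, ofReal_im, I_mul_im, ofReal_re, zero_add, im_solitonLogDeriv hσ])
  have hσ' : (2*σ+2 : ℂ) ≠ 0 := by exact_mod_cast (by positivity : 2*σ+2 ≠ 0)
  refine ((hasDerivAt_phi hσ hc x).ofReal_comp.mul hphase.cexp).congr_deriv ?_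
  rw [hQ, Phi]
  push_cast
  field_simp

lemma hasDerivAt_solitonLogDeriv (x : ℝ) :
    HasDerivAt (solitonLogDeriv σ c) (σ*c^2 / ((σ*c*x : ℝ) - I)^2) x := by
  refine ((hasDerivAt_const x _).sub ((hasDerivAt_const x (c:ℂ)).div
    (hasDerivAt_ofReal_mul_sub_I (σ*c) x) (ofReal_sub_I_ne_zero _))).congr_deriv ?_
  push_cast
  ring

lemma hasDerivAt_deriv_solitonLogDeriv (x : ℝ) :
    HasDerivAt (fun y => σ*c^2 / ((σ*c*y : ℝ) - I)^2 : ℝ → ℂ)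
      (-2*σ^2*c^3 / ((σ*c*x : ℝ) - I)^3) x := by
  have hz := ofReal_sub_I_ne_zero (σ*c*x)
  refine ((hasDerivAt_const x _).div ((hasDerivAt_ofReal_mul_sub_I (σ*c) x).pow 2)
    (pow_ne_zero 2 hz)).congr_deriv ?_
  simp only [Pi.pow_apply]
  field_simp
  push_cast
  ring

lemma norm_Phi (hσ : 0 < σ) (hc : 0 < c) (x : ℝ) : ‖Phi σ c x‖ = phi σ c x := by
  simp [Phi, Complex.norm_exp, Complex.div_re, abs_of_pos (phi_pos hσ hc x)]

lemma Phi_ne_zero (hσ : 0 < σ) (hc : 0 < c) (x : ℝ) : Phi σ c x ≠ 0 :=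
  norm_pos_iff.1 (by rw [norm_Phi hσ hc]; exact phi_pos hσ hc x)

lemma solitonLogDeriv_profile_equation (x : ℝ) :
    -I * (solitonLogDeriv σ c x ^ 3
        + 3 * solitonLogDeriv σ c x * (σ*c^2 / ((σ*c*x : ℝ) - I)^2)
        + -2*σ^2*c^3 / ((σ*c*x : ℝ) - I)^3)
      + ((solitonDensity σ c x : ℂ) - c) * (solitonLogDeriv σ c x ^ 2 + σ*c^2 / ((σ*c*x : ℝ) - I)^2)
      + I * ((c^2/4 : ℝ) : ℂ) * solitonLogDeriv σ c x
      + σ * (solitonDensity σ c x : ℂ) * solitonLogDeriv σ c x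
          * (solitonLogDeriv σ c x - conj (solitonLogDeriv σ c x))
    = -((c^2/2 : ℝ) : ℂ) * σ * (solitonDensity σ c x : ℂ) := by
  have hz := ofReal_sub_I_ne_zero (σ*c*x)
  have hz' := ofReal_add_I_ne_zero (σ*c*x)
  have hconj : conj (solitonLogDeriv σ c x) = -I * c / 2 - c / ((σ*c*x : ℝ) + I) := by
    simp [solitonLogDeriv, map_div₀, map_ofNat]
  have hρ : (solitonDensity σ c x : ℂ) = 2*c*(σ+1) / (((σ*c*x : ℝ) - I) * ((σ*c*x : ℝ) + I)) := by
    have hfac : (((σ*c*x : ℝ) : ℂ) - I) * ((σ*c*x : ℝ) + I) = ((σ^2*(c*x)^2+1 : ℝ) : ℂ) := by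
      push_cast
      linear_combination -I_sq
    rw [hfac, solitonDensity]
    push_cast
    rfl
  rw [hconj, hρ, solitonLogDeriv]
  clear hconj hρ
  generalize ((σ*c*x : ℝ) : ℂ) = t at hz hz' ⊢
  push_cast
  field_simp
  have hI : I ^ 2 = -1 := I_sq
  grind

lemma Spp_I_deriv_Phi (hσ : 0 < σ) (hc : 0 < c) (x : ℝ) :
    Spp σ c (Phi σ c) (fun y => I * deriv (Phi σ c) y) x
      = -((c^2/2 : ℝ) : ℂ) * σ * ((‖Phi σ c x‖ ^ (2*σ) : ℝ) : ℂ) * Phi σ c x := by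
  rw [Spp_I_deriv_of_hasDerivAt σ c (hasDerivAt_Phi hσ hc) hasDerivAt_solitonLogDeriv
    hasDerivAt_deriv_solitonLogDeriv (Phi_ne_zero hσ hc x),
    norm_Phi hσ hc, phi_rpow_two_mul hσ hc, solitonLogDeriv_profile_equation]
  ring

lemma Spp_I_deriv_Phi_mul_conj (hσ : 0 < σ) (hc : 0 < c) (x : ℝ) :
    Spp σ c (Phi σ c) (fun y => I * deriv (Phi σ c) y) x * conj (I * deriv (Phi σ c) x)
      = ((c^2/2 * σ * solitonDensity σ c x ^ (1/σ + 1) : ℝ) : ℂ)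
          * (I * conj (solitonLogDeriv σ c x)) := by
  have hmod : Phi σ c x * conj (Phi σ c x) = ((solitonDensity σ c x ^ (1/σ) : ℝ) : ℂ) := by
    rw [mul_conj', norm_Phi hσ hc, ← phi_sq hσ hc]
    push_cast
    rfl
  rw [Spp_I_deriv_Phi hσ hc, (hasDerivAt_Phi hσ hc x).deriv, norm_Phi hσ hc,
    phi_rpow_two_mul hσ hc, Real.rpow_add_one (solitonDensity_pos hσ hc x).ne']
  simp only [map_mul, conj_I]
  push_cast
  linear_combination
    (-(c^2/2 : ℂ) * σ * solitonDensity σ c x * (-I) * conj (solitonLogDeriv σ c x)) * hmod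

lemma continuous_solitonLogDeriv : Continuous (solitonLogDeriv σ c) :=
  continuous_const.sub (continuous_const.div (by fun_prop) fun _ => ofReal_sub_I_ne_zero _)

lemma norm_solitonLogDeriv_le (x : ℝ) : ‖solitonLogDeriv σ c x‖ ≤ 3/2 * |c| := by
  have hz : 1 ≤ ‖((σ*c*x : ℝ) : ℂ) - I‖ := by
    simpa using abs_im_le_norm (((σ*c*x : ℝ) : ℂ) - I)
  calc ‖solitonLogDeriv σ c x‖ ≤ ‖I * c / 2‖ + ‖(c : ℂ) / ((σ*c*x : ℝ) - I)‖ := norm_sub_le _ _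
    _ ≤ |c|/2 + |c| := by
        gcongr
        · simp
        · rw [norm_div, norm_real, Real.norm_eq_abs]
          exact div_le_self (abs_nonneg c) hz
    _ = 3/2 * |c| := by ring

lemma integrable_Spp_I_deriv_Phi_mul_conj (hσ : 0 < σ) (hc : 0 < c) :
    Integrable fun x => Spp σ c (Phi σ c) (fun y => I * deriv (Phi σ c) y) x
      * conj (I * deriv (Phi σ c) x) := by
  have hq : 1/2 < 1/σ + 1 := by linarith [one_div_pos.2 hσ]
  simp only [Spp_I_deriv_Phi_mul_conj hσ hc]
  exact (((integrable_solitonDensity_rpow hσ hc hq).const_mul _).ofReal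
    |>.mul_bdd (continuous_const.mul continuous_solitonLogDeriv.star).aestronglyMeasurable
      (.of_forall fun x => by simpa using norm_solitonLogDeriv_le x))

lemma re_integral_Spp_I_deriv_Phi_mul_conj (hσ : 0 < σ) (hc : 0 < c) :
    (∫ x, Spp σ c (Phi σ c) (fun y => I * deriv (Phi σ c) y) x * conj (I * deriv (Phi σ c) x)).re
      = c^2/2 * σ * (c/2 * (∫ x, solitonDensity σ c x ^ (1/σ + 1))
          - (∫ x, solitonDensity σ c x ^ (1/σ + 1 + 1)) / (2*σ+2)) := by
  have hq : 1/2 < 1/σ + 1 := by linarith [one_div_pos.2 hσ]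
  rw [← RCLike.re_to_complex, ← integral_re (integrable_Spp_I_deriv_Phi_mul_conj hσ hc)]
  have hre : ∀ x, RCLike.re (Spp σ c (Phi σ c) (fun y => I * deriv (Phi σ c) y) x
      * conj (I * deriv (Phi σ c) x)) = c^2/2 * σ * (c/2 * solitonDensity σ c x ^ (1/σ + 1)
        - solitonDensity σ c x ^ (1/σ + 1 + 1) / (2*σ+2)) := fun x => by
    rw [Spp_I_deriv_Phi_mul_conj hσ hc, RCLike.re_to_complex, re_ofReal_mul, I_mul_re, conj_im,
      neg_neg, im_solitonLogDeriv hσ, Real.rpow_add_one (solitonDensity_pos hσ hc x).ne' (1/σ + 1)]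
    ring
  simp only [hre]
  rw [integral_const_mul, integral_sub ((integrable_solitonDensity_rpow hσ hc hq).const_mul _)
    ((integrable_solitonDensity_rpow hσ hc (by linarith)).div_const _), integral_const_mul,
    integral_div]

lemma Mass_eq (hσ : 0 < σ) (hc : 0 < c) :
    Mass σ c = 1/2 * ∫ x, solitonDensity σ c x ^ (1/σ) := by
  simp only [Mass, norm_Phi hσ hc, phi_sq hσ hc]

end Soliton

theorem stmt13 (σ c : ℝ) (hσ : σ ∈ Set.Ioo (1:ℝ) 2) (hc : 0 < c) :
    (∀ x : ℝ, Spp σ c (Phi σ c) (fun y => Complex.I * deriv (Phi σ c) y) x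
        = -((c^2/2 : ℝ) : ℂ) * (σ : ℂ) * ((‖Phi σ c x‖ ^ (2*σ) : ℝ) : ℂ) * Phi σ c x)
      ∧ (∫ x : ℝ, Spp σ c (Phi σ c) (fun y => Complex.I * deriv (Phi σ c) y) x *
            (starRingEnd ℂ) (Complex.I * deriv (Phi σ c) x)).re
          = -(c^4/2) * (2 - σ) * σ * Mass σ c
      ∧ -(c^4/2) * (2 - σ) * σ * Mass σ c < 0 := by
  obtain ⟨hσ₁, hσ₂⟩ := hσ
  have hσ₀ : 0 < σ := by linarith
  have hp : 1/2 < 1/σ := by rw [div_lt_div_iff₀ two_pos hσ₀]; linarith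
  have hmass : 0 < Mass σ c := by
    rw [Mass_eq hσ₀ hc]
    exact mul_pos one_half_pos (integral_solitonDensity_rpow_pos hσ₀ hc hp)
  refine ⟨Spp_I_deriv_Phi hσ₀ hc, ?_, ?_⟩
  · rw [re_integral_Spp_I_deriv_Phi_mul_conj hσ₀ hc,
      integral_solitonDensity_rpow_add_one hσ₀ hc (by linarith : 1/2 < 1/σ + 1),
      integral_solitonDensity_rpow_add_one hσ₀ hc hp, Mass_eq hσ₀ hc]
    field_simp
    ring
  · have : 0 < c^4/2 * (2 - σ) * σ * Mass σ c :=
      mul_pos (mul_pos (mul_pos (by positivity) (by linarith)) hσ₀) hmass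
    linarith
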